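/- In the tree reduced instance, the vote counts in the full (unrestricted) election are: every candidate e ∈ U receives exactly m + 2 votes, candidate c receives exactly m + 2 votes, and candidate d receives exactly m + 1 − ℓ votes; that is, |τ⁻¹(e)| = m + 2 for each e ∈ U, |τ⁻¹(c)| = m + 2, and |τ⁻¹(d)| = m + 1 − ℓ. -/

import Mathlib

/-- Vertices of the tree reduced instance: for each `i ∈ [m]`, the path `P^(i)` has
vertices `v i j` (`j : Fin 3`, the vertices `v^(i)_1, v^(i)_2, v^(i)_3`), `u i k`
(`k : Fin (3ℓ)`, the vertices `u^(i)_1, …, u^(i)_{3ℓ}`) and `w i`; the path `P^#` has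
vertices `zh 0, zh 1`; the path `P^*` has vertices `zs t` for `t : Fin (m + 1 - ℓ)`
(all 0-indexed). -/
inductive VT (ℓ m : ℕ) : Type
  | v (i : Fin m) (j : Fin 3) : VT ℓ m
  | u (i : Fin m) (k : Fin (3 * ℓ)) : VT ℓ m
  | w (i : Fin m) : VT ℓ m
  | zh (j : Fin 2) : VT ℓ m
  | zs (t : Fin (m + 1 - ℓ)) : VT ℓ m
  deriving DecidableEq

/-- The candidate set `C = U ∪ {c, d}`, where `U = {1, …, 3ℓ}`. -/
inductive CandT (ℓ : ℕ) : Type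
  | elem (k : Fin (3 * ℓ)) : CandT ℓ
  | c : CandT ℓ
  | d : CandT ℓ
  deriving DecidableEq

/-- Base edge relation of the tree reduced instance: consecutive vertices of each path
`P^(i) = (v^(i)_1, v^(i)_2, v^(i)_3, u^(i)_1, …, u^(i)_{3ℓ}, w^(i))`, of
`P^# = (z#_1, z#_2)` and of `P^* = (z*_1, …, z*_{m+1−ℓ})` are adjacent, and the last
vertex `z*_{m+1−ℓ}` of `P^*` is joined to each head `v^(i)_1` and to `z#_1`. -/
def baseRelT (ℓ m : ℕ) : VT ℓ m → VT ℓ m → Prop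
  | .v i j, .v i' j' => i = i' ∧ (j : ℕ) + 1 = (j' : ℕ)
  | .v i j, .u i' k => i = i' ∧ (j : ℕ) = 2 ∧ (k : ℕ) = 0
  | .u i k, .u i' k' => i = i' ∧ (k : ℕ) + 1 = (k' : ℕ)
  | .u i k, .w i' => i = i' ∧ (k : ℕ) + 1 = 3 * ℓ
  | .zh j, .zh j' => (j : ℕ) + 1 = (j' : ℕ)
  | .zs t, .zs t' => (t : ℕ) + 1 = (t' : ℕ)
  | .zs t, .v _ j => (t : ℕ) + 1 = m + 1 - ℓ ∧ (j : ℕ) = 0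
  | .zs t, .zh j => (t : ℕ) + 1 = m + 1 - ℓ ∧ (j : ℕ) = 0
  | _, _ => False

/-- The tree of the tree reduced instance. -/
def GT (ℓ m : ℕ) : SimpleGraph (VT ℓ m) := SimpleGraph.fromRel (baseRelT ℓ m)

/-- The voting function, given an enumeration `e i 0, e i 1, e i 2` of the elements of
each set `S_i`: `v^(i)_j` votes for `e^(i)_j`, `u^(i)_k` votes for `k`, the `w^(i)` and
`z#`'s vote for `c`, and the `z*`'s vote for `d`. -/
def τT (ℓ m : ℕ) (e : Fin m → Fin 3 → Fin (3 * ℓ)) : VT ℓ m → CandT ℓ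
  | .v i j => CandT.elem (e i j)
  | .u _ k => CandT.elem k
  | .w _ => CandT.c
  | .zh _ => CandT.c
  | .zs _ => CandT.d

/-- The set `S_i`, recovered from the enumeration of its elements. -/
def SetT (ℓ m : ℕ) (e : Fin m → Fin 3 → Fin (3 * ℓ)) (i : Fin m) :
    Finset (Fin (3 * ℓ)) :=
  Finset.image (e i) Finset.univ

/-- The distinguished vertex `x = z*_1`. -/
def xT (ℓ m : ℕ) (h : 0 < m + 1 - ℓ) : VT ℓ m := VT.zs ⟨0, h⟩

/-- `HW G W x`: the set of vertices reachable from `x` in the subgraph of `G` induced on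
the complement of `W` (each step of a connecting walk must avoid `W`). -/
def HW {V : Type*} (G : SimpleGraph V) (W : Set V) (x : V) : Set V :=
  {z | Relation.ReflTransGen (fun a b => G.Adj a b ∧ a ∉ W ∧ b ∉ W) x z}

/-- Candidate `c` uniquely wins the election restricted to `W`: every other candidate
gets strictly fewer votes among the voters of `H_W`. -/
def winsT (ℓ m : ℕ) (e : Fin m → Fin 3 → Fin (3 * ℓ)) (x : VT ℓ m)
    (W : Set (VT ℓ m)) : Prop :=
  ∀ y : CandT ℓ, y ≠ CandT.c →
    (HW (GT ℓ m) W x ∩ τT ℓ m e ⁻¹' {y}).ncard <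
      (HW (GT ℓ m) W x ∩ τT ℓ m e ⁻¹' {CandT.c}).ncard


/-! Candidate `k ∈ U` gets one vote from each `u^(i)_k` and, as each enumeration `e^(i)` is
injective, one vote from the `v`-vertices of each of the two paths `P^(i)` with `k ∈ S_i`;
`c` gets the votes of the `m` vertices `w^(i)` and of the two vertices of `P^#`, and `d` those
of `P^*`. -/

open Finset

section Counting

variable {κ ι α : Type*} [Fintype κ] [Fintype ι] [DecidableEq α]

theorem card_filter_apply_eq_of_injective {f : ι → α} (hf : Function.Injective f) (a : α) :
    #{j | f j = a} = if a ∈ univ.image f then 1 else 0 := by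
  split_ifs with ha
  · obtain ⟨j, -, rfl⟩ := mem_image.mp ha
    rw [card_eq_one]
    exact ⟨j, by ext; simp [hf.eq_iff]⟩
  · rw [card_eq_zero, filter_eq_empty_iff]
    exact fun j _ hj => ha (mem_image.mpr ⟨j, mem_univ j, hj⟩)

theorem card_filter_uncurry_eq_card_filter_mem_image {e : κ → ι → α}
    (he : ∀ i, Function.Injective (e i)) (a : α) :
    #{p : κ × ι | e p.1 p.2 = a} = #{i | a ∈ univ.image (e i)} := by
  rw [card_filter, Fintype.sum_prod_type, card_filter]
  refine sum_congr rfl fun i _ => ?_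
  rw [← card_filter, card_filter_apply_eq_of_injective (he i)]

end Counting

namespace VT

variable {ℓ m : ℕ} (e : Fin m → Fin 3 → Fin (3 * ℓ))

theorem ncard_τT_preimage_elem (k : Fin (3 * ℓ)) :
    (τT ℓ m e ⁻¹' {CandT.elem k}).ncard = #{p : Fin m × Fin 3 | e p.1 p.2 = k} + m := by
  have hset : τT ℓ m e ⁻¹' {CandT.elem k} =
      ↑(({p : Fin m × Fin 3 | e p.1 p.2 = k} : Finset _).image (fun p => v p.1 p.2) ∪
        univ.image (fun i => (u i k : VT ℓ m))) := by
    ext x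
    cases x <;> simp [τT, eq_comm]
  rw [hset, Set.ncard_coe_finset, card_union_of_disjoint, card_image_of_injective,
    card_image_of_injective, card_univ, Fintype.card_fin]
  · exact fun i i' h => by simpa using h
  · exact fun p p' h => by simpa [Prod.ext_iff] using h
  · simp only [disjoint_left, mem_image]
    rintro _ ⟨p, -, rfl⟩ ⟨i, -, h⟩
    cases h

theorem ncard_τT_preimage_c : (τT ℓ m e ⁻¹' {CandT.c}).ncard = m + 2 := by
  have hset : τT ℓ m e ⁻¹' {CandT.c} =
      ↑(univ.image (fun i => (w i : VT ℓ m)) ∪ univ.image (fun j => (zh j : VT ℓ m))) := by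
    ext x
    cases x <;> simp [τT]
  rw [hset, Set.ncard_coe_finset, card_union_of_disjoint, card_image_of_injective,
    card_image_of_injective] <;> simp [Function.Injective, disjoint_left]

theorem ncard_τT_preimage_d : (τT ℓ m e ⁻¹' {CandT.d}).ncard = m + 1 - ℓ := by
  have hset : τT ℓ m e ⁻¹' {CandT.d} = ↑(univ.image (fun t => (zs t : VT ℓ m))) := by
    ext x
    cases x <;> simp [τT]
  rw [hset, Set.ncard_coe_finset, card_image_of_injective] <;> simp [Function.Injective]

end VT

theorem tree_full_vote_counts (ℓ m : ℕ)
    (e : Fin m → Fin 3 → Fin (3 * ℓ))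
    (hinj : ∀ i, Function.Injective (e i))
    (htwo : ∀ k : Fin (3 * ℓ),
      (Finset.univ.filter fun i => k ∈ SetT ℓ m e i).card = 2) :
    (∀ k : Fin (3 * ℓ), (τT ℓ m e ⁻¹' {CandT.elem k}).ncard = m + 2) ∧
    (τT ℓ m e ⁻¹' {CandT.c}).ncard = m + 2 ∧
    (τT ℓ m e ⁻¹' {CandT.d}).ncard = m + 1 - ℓ := by
  refine ⟨fun k => ?_, VT.ncard_τT_preimage_c e, VT.ncard_τT_preimage_d e⟩
  rw [VT.ncard_τT_preimage_elem, card_filter_uncurry_eq_card_filter_mem_image hinj,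
    ← htwo k, add_comm]
  rfl
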